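/- Let X_1,...,X_U be random variables with means μ_u, variances σ_u², and mean of means μ̄ = U^{-1} Σ μ_u. Then for any 1 ≤ q ≤ U, the q-th order statistic satisfies E[X_{(q)}] ≤ μ̄ + sqrt((q-1)/(U-q+1) · Σ_{u=1}^U (σ_u² + (μ_u - μ̄)²)). No independence among the X_u is required. -/

import Mathlib

open MeasureTheory ProbabilityTheory

/-- The `q`-th smallest entry (0-indexed) of a finite tuple of reals. -/
noncomputable def orderStat {U : ℕ} (x : Fin U → ℝ) (q : Fin U) : ℝ :=
  x (Tuple.sort x q)

/-!
If at least `k` of the reals `x_u` are `≥ m`, weighting `x_u - c` by `1/k` on those indices minus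
`1/U` everywhere and applying Cauchy–Schwarz gives `m ≤ x̄ + √((1/k - 1/U) ∑ (x_u - c)²)`, where
`x̄` is the mean of the `x_u`. For `m = x_(q)` one may take `k = U - q + 1`. Integrating this
pointwise bound with `c = μ̄`, Jensen's inequality for the concave square root and
`E (X_u - μ̄)² = σ_u² + (μ_u - μ̄)²` give the claim, even with an extra factor `1/U` under the root.
-/

open Finset

lemma le_mean_add_sqrt_of_forall_mem_le {ι : Type*} [Fintype ι] [DecidableEq ι] (x : ι → ℝ)
    {T : Finset ι} (hT : T.Nonempty) {m : ℝ} (hm : ∀ u ∈ T, m ≤ x u) (c : ℝ) :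
    m ≤ (∑ u, x u) / Fintype.card ι +
      √((1 / #T - 1 / Fintype.card ι) * ∑ u, (x u - c) ^ 2) := by
  have : Nonempty ι := ⟨hT.choose⟩
  set N : ℝ := ((Fintype.card ι : ℕ) : ℝ)
  set t : ℝ := ((#T : ℕ) : ℝ)
  have hN : N ≠ 0 := by positivity
  have ht : t ≠ 0 := by simp [t, hT.ne_empty]
  set w : ι → ℝ := fun u => (if u ∈ T then t⁻¹ else 0) - N⁻¹
  have hw_sum : ∑ u, w u = 0 := by
    simp [w, sum_sub_distrib, sum_ite_mem, ht, hN, N, t]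
  have hw_sq : ∑ u, w u ^ 2 = 1 / t - 1 / N := by
    have (u : ι) : w u ^ 2 = (if u ∈ T then t⁻¹ ^ 2 - 2 * t⁻¹ * N⁻¹ else 0) + N⁻¹ ^ 2 := by
      simp only [w]; split_ifs <;> ring
    simp only [this, sum_add_distrib, sum_ite_mem, univ_inter, sum_const, card_univ, nsmul_eq_mul]
    field_simp
    ring
  have hw_mul : ∑ u, w u * (x u - c) = (∑ u ∈ T, x u) / t - (∑ u, x u) / N := by
    simp only [mul_sub, sum_sub_distrib, ← sum_mul, hw_sum, zero_mul, sub_zero]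
    simp only [w, sub_mul, ite_mul, zero_mul, sum_ite_mem, univ_inter, ← mul_sum, sum_sub_distrib]
    field_simp
  have hm_le : m ≤ (∑ u ∈ T, x u) / t := by
    rw [le_div_iff₀ (by positivity), mul_comm, ← nsmul_eq_mul]
    exact card_nsmul_le_sum T x m hm
  calc m ≤ (∑ u, x u) / N + ∑ u, w u * (x u - c) := by rw [hw_mul]; linarith
    _ ≤ (∑ u, x u) / N + √(∑ u, w u ^ 2) * √(∑ u, (x u - c) ^ 2) := by
      gcongr; exact Real.sum_mul_le_sqrt_mul_sqrt _ _ _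
    _ = _ := by rw [← Real.sqrt_mul' _ (by positivity), hw_sq]

section OrderStat

variable {n : ℕ} (x : Fin n → ℝ) (i : Fin n)

lemma le_card_filter_le_orderStat : (i : ℕ) + 1 ≤ #{u | x u ≤ orderStat x i} := by
  rw [← Fin.card_Iic i, ← card_map (Tuple.sort x).toEmbedding]
  refine card_le_card fun u hu => ?_
  obtain ⟨j, hj, rfl⟩ := mem_map.mp hu
  exact mem_filter.mpr ⟨mem_univ _, Tuple.monotone_sort x (mem_Iic.mp hj)⟩

lemma le_card_filter_orderStat_le : n - i ≤ #{u | orderStat x i ≤ x u} := by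
  rw [← Fin.card_Ici i, ← card_map (Tuple.sort x).toEmbedding]
  refine card_le_card fun u hu => ?_
  obtain ⟨j, hj, rfl⟩ := mem_map.mp hu
  exact mem_filter.mpr ⟨mem_univ _, Tuple.monotone_sort x (mem_Ici.mp hj)⟩

lemma orderStat_le_iff_le_card (c : ℝ) : orderStat x i ≤ c ↔ (i : ℕ) + 1 ≤ #{u | x u ≤ c} := by
  constructor
  · intro h
    refine (le_card_filter_le_orderStat x i).trans (card_le_card fun u => ?_)
    simp only [mem_filter, mem_univ, true_and]
    exact fun hu => hu.trans h
  · intro h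
    by_contra! hc
    have hsub : #{u | x u ≤ c} ≤ #{u | ¬ orderStat x i ≤ x u} := by
      refine card_le_card fun u => ?_
      simp only [mem_filter, mem_univ, true_and, not_le]
      exact fun hu => hu.trans_lt hc
    have hsplit := card_filter_add_card_filter_not (s := univ) (orderStat x i ≤ x ·)
    rw [card_univ, Fintype.card_fin] at hsplit
    have := le_card_filter_orderStat_le x i
    omega

lemma orderStat_le_mean_add_sqrt (c : ℝ) :
    orderStat x i ≤ (∑ u, x u) / n + √(i / ((n - i) * n) * ∑ u, (x u - c) ^ 2) := by
  have hcard := le_card_filter_orderStat_le x i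
  have hT : ({u | orderStat x i ≤ x u} : Finset (Fin n)).Nonempty := by
    rw [← card_pos]; omega
  refine (le_mean_add_sqrt_of_forall_mem_le x hT (fun u hu => (mem_filter.mp hu).2) c).trans ?_
  simp only [Fintype.card_fin]
  have hi : (i : ℝ) < n := by exact_mod_cast i.is_lt
  have hk : (n : ℝ) - i ≤ (#{u | orderStat x i ≤ x u} : ℕ) := by
    rw [← Nat.cast_sub i.is_lt.le]; exact_mod_cast hcard
  have hcoef : 1 / ((#{u | orderStat x i ≤ x u} : ℕ) : ℝ) - 1 / n ≤ i / ((n - i) * n) := by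
    calc _ ≤ 1 / ((n : ℝ) - i) - 1 / n := by gcongr
      _ = i / ((n - i) * n) := by
        field_simp [(by linarith : (n : ℝ) - i ≠ 0), (by linarith : (n : ℝ) ≠ 0)]; ring
  gcongr

end OrderStat

section Integral

variable {Ω : Type*} [MeasurableSpace Ω] {μ : Measure Ω}

lemma MeasureTheory.Integrable.sqrt [IsFiniteMeasure μ] {f : Ω → ℝ} (hf : Integrable f μ)
    (hf0 : 0 ≤ᵐ[μ] f) :
    Integrable (fun ω => √(f ω)) μ := by
  refine (hf.add (integrable_const 1)).mono'
    (Real.continuous_sqrt.comp_aestronglyMeasurable hf.1) ?_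
  filter_upwards [hf0] with ω (hω : 0 ≤ f ω)
  rw [Real.norm_of_nonneg (Real.sqrt_nonneg _), Pi.add_apply, Real.sqrt_le_iff]
  exact ⟨by positivity, by nlinarith⟩

lemma integral_sqrt_le_sqrt_integral [IsProbabilityMeasure μ] {f : Ω → ℝ}
    (hf : Integrable f μ) (hf0 : 0 ≤ᵐ[μ] f) : ∫ ω, √(f ω) ∂μ ≤ √(∫ ω, f ω ∂μ) :=
  Real.strictConcaveOn_sqrt.concaveOn.le_map_integral Real.continuous_sqrt.continuousOn
    isClosed_Ici hf0 hf (hf.sqrt hf0)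

lemma integral_sub_const_sq_eq_variance_add [IsProbabilityMeasure μ] {Y : Ω → ℝ}
    (hY : MemLp Y 2 μ) (t : ℝ) :
    ∫ ω, (Y ω - t) ^ 2 ∂μ = variance Y μ + ((∫ ω, Y ω ∂μ) - t) ^ 2 := by
  have h := variance_eq_sub (X := fun ω => Y ω - t) (hY.sub (memLp_const t))
  rw [variance_sub_const hY.1] at h
  rw [h, integral_sub (hY.integrable one_le_two) (integrable_const t)]
  simp

variable {n : ℕ} {X : Fin n → Ω → ℝ}

lemma measurable_orderStat (hX : ∀ u, Measurable (X u)) (i : Fin n) :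
    Measurable fun ω => orderStat (fun u => X u ω) i := by
  refine measurable_of_Iic fun c => ?_
  have hcard : Measurable fun ω => #{u | X u ω ≤ c} := by
    simp only [card_filter]
    exact Finset.measurable_sum _ fun u _ =>
      Measurable.ite (measurableSet_le (hX u) measurable_const) measurable_const measurable_const
  convert measurableSet_le measurable_const hcard using 1
  ext ω
  exact orderStat_le_iff_le_card _ i c

lemma integrable_orderStat (hX : ∀ u, Measurable (X u)) (hint : ∀ u, Integrable (X u) μ)
    (i : Fin n) : Integrable (fun ω => orderStat (fun u => X u ω) i) μ := by
  refine (integrable_finsetSum univ fun u _ => (hint u).abs).mono'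
    (measurable_orderStat hX i).aestronglyMeasurable (ae_of_all _ fun ω => ?_)
  exact single_le_sum (f := fun u => |X u ω|) (fun u _ => abs_nonneg _) (mem_univ _)

lemma integral_orderStat_le_mean_add_sqrt [IsProbabilityMeasure μ] (hX : ∀ u, Measurable (X u))
    (hL2 : ∀ u, MemLp (X u) 2 μ) (i : Fin n) (c : ℝ) :
    ∫ ω, orderStat (fun u => X u ω) i ∂μ ≤
      (∑ u, ∫ ω, X u ω ∂μ) / n + √(i / ((n - i) * n) * ∑ u, ∫ ω, (X u ω - c) ^ 2 ∂μ) := by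
  have hint u : Integrable (X u) μ := (hL2 u).integrable one_le_two
  have hmean : Integrable (fun ω => (∑ u, X u ω) / n) μ :=
    (integrable_finsetSum univ fun u _ => hint u).div_const _
  have hsqu u : Integrable (fun ω => (X u ω - c) ^ 2) μ :=
    ((hL2 u).sub (memLp_const c)).integrable_sq
  have hsq : Integrable (fun ω => i / ((n - i) * n) * ∑ u, (X u ω - c) ^ 2) μ :=
    (integrable_finsetSum univ fun u _ => hsqu u).const_mul _
  have hsq0 : 0 ≤ᵐ[μ] fun ω => i / ((n - i) * n) * ∑ u, (X u ω - c) ^ 2 :=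
    ae_of_all _ fun ω => mul_nonneg (div_nonneg i.val.cast_nonneg
      (mul_nonneg (sub_nonneg.mpr (by exact_mod_cast i.is_lt.le)) n.cast_nonneg))
      (sum_nonneg fun u _ => sq_nonneg _)
  calc ∫ ω, orderStat (fun u => X u ω) i ∂μ
      ≤ ∫ ω, ((∑ u, X u ω) / n + √(i / ((n - i) * n) * ∑ u, (X u ω - c) ^ 2)) ∂μ :=
        integral_mono (integrable_orderStat hX hint i)
          (hmean.add (hsq.sqrt hsq0))
          fun ω => orderStat_le_mean_add_sqrt (fun u => X u ω) i c
    _ = (∑ u, ∫ ω, X u ω ∂μ) / n + ∫ ω, √(i / ((n - i) * n) * ∑ u, (X u ω - c) ^ 2) ∂μ := by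
        rw [integral_add hmean (hsq.sqrt hsq0), integral_div,
          integral_finsetSum _ fun u _ => hint u]
    _ ≤ _ := by
        grw [integral_sqrt_le_sqrt_integral hsq hsq0, integral_const_mul,
          integral_finsetSum _ fun u _ => hsqu u]

end Integral

/-- Arnold–Groeneveld / Bertsimas–Natarajan–Teo bound: for arbitrarily dependent random
variables `X 1, …, X U` with finite second moments, means `μ_u` and variances `σ_u²`,
and `μ̄ = U⁻¹ ∑ μ_u`, the `q`-th order statistic satisfies
`E[X_{(q)}] ≤ μ̄ + √((q-1)/(U-q+1) · ∑ (σ_u² + (μ_u - μ̄)²))`. -/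
theorem order_statistic_mean_bound
    {Ω : Type*} [MeasurableSpace Ω] (μ : Measure Ω) [IsProbabilityMeasure μ]
    {U : ℕ} (X : Fin U → Ω → ℝ)
    (hmeas : ∀ u, Measurable (X u)) (hL2 : ∀ u, MemLp (X u) 2 μ)
    (q : ℕ) (hq1 : 1 ≤ q) (hqU : q ≤ U) :
    (∫ ω, orderStat (fun u => X u ω) ⟨q - 1, by omega⟩ ∂μ) ≤
      (∑ u, ∫ ω, X u ω ∂μ) / U +
        Real.sqrt (((q - 1 : ℝ) / ((U : ℝ) - q + 1)) *
          ∑ u, (variance (X u) μ +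
            ((∫ ω, X u ω ∂μ) - (∑ v, ∫ ω, X v ω ∂μ) / U) ^ 2)) := by
  have key := integral_orderStat_le_mean_add_sqrt hmeas hL2 ⟨q - 1, by omega⟩
    ((∑ v, ∫ ω, X v ω ∂μ) / U)
  simp only [integral_sub_const_sq_eq_variance_add (hL2 _), Nat.cast_sub hq1, Nat.cast_one] at key
  have hq : (1 : ℝ) ≤ q := by exact_mod_cast hq1
  have hU : (q : ℝ) ≤ U := by exact_mod_cast hqU
  refine key.trans ?_
  gcongr _ + √(?_ * _)
  · exact sum_nonneg fun u _ => add_nonneg (variance_nonneg _ _) (sq_nonneg _)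
  · rw [show (U : ℝ) - (q - 1) = U - q + 1 by ring]
    exact div_le_div_of_nonneg_left (by linarith) (by linarith)
      (le_mul_of_one_le_right (by linarith) (by linarith))
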